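/- For real numbers σ₀ with 1/2 ≤ σ₀ ≤ 1 and δ with 0 < δ ≤ 1/100, if a = log(1 + (2 - σ₀ - 10δ)/(1/δ - 2)) / log(1 + (2 - σ₀ - δ)/(1/δ - 2)), then a ≤ ((2 - σ₀ - 10δ)/(2 - σ₀ - δ)) · (1 + δ/3). -/
import Mathlib

/-- Second-order Taylor bounds for `log (1+t)`. -/
lemma log_taylor2 {t : ℝ} (h0 : 0 ≤ t) (h1 : t < 1) :
    Real.log (1 + t) ≤ t - t^2/2 + t^3/(1-t) ∧
    t - t^2/2 - t^3/(1-t) ≤ Real.log (1 + t) := by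
  have habs : |(-t : ℝ)| < 1 := by rw [abs_neg, abs_of_nonneg h0]; exact h1
  have h := Real.abs_log_sub_add_sum_range_le habs 2
  simp [Finset.sum_range_succ, abs_of_nonneg h0] at h
  rw [abs_le] at h
  norm_num at h
  obtain ⟨h1', h2'⟩ := h
  constructor <;> nlinarith [h1', h2']

/-- Core inequality in abstracted variables. -/
lemma core {x y δ : ℝ} (hx : 0 < x) (hxy : x ≤ y) (hy : y ≤ 1/50)
    (hδ : 0 < δ) (hδ2 : δ ≤ 1/100) (h1 : y - x ≤ 10*δ*y) (h2 : y ≤ 2*δ) :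
    Real.log (1 + x) ≤ (x/y) * (1 + δ/3) * Real.log (1 + y) := by
  have hy0 : 0 < y := lt_of_lt_of_le hx hxy
  have hx1 : x < 1 := by linarith
  have hy1 : y < 1 := by linarith
  have hxm : (0:ℝ) < 1 - x := by linarith
  have hym : (0:ℝ) < 1 - y := by linarith
  obtain ⟨hUx, -⟩ := log_taylor2 hx.le hx1
  obtain ⟨-, hLy⟩ := log_taylor2 hy0.le hy1
  have hu : x^3/(1-x) ≤ (50/49)*x^3 := by
    rw [div_le_iff₀ hxm]; nlinarith [pow_pos hx 3]
  have hv : y^3/(1-y) ≤ (50/49)*y^3 := by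
    rw [div_le_iff₀ hym]; nlinarith [pow_pos hy0 3]
  have hs : (y-x)/2 + (50/49)*x^2 + (50/49)*y^2*(1+δ/3) + y*δ/6 ≤ δ/3 := by
    have hx2 : x^2 ≤ y^2 := by nlinarith
    have hy2 : y^2 ≤ 4*δ^2 := by nlinarith
    nlinarith [mul_le_mul_of_nonneg_left h2 hδ.le, sq_nonneg δ, mul_le_mul_of_nonneg_left h2 hy0.le]
  have key : x - x^2/2 + x^3/(1-x) ≤ (x/y) * (1 + δ/3) * (y - y^2/2 - y^3/(1-y)) := by
    rw [div_mul_eq_mul_div, div_mul_eq_mul_div, le_div_iff₀ hy0]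
    have hmid : (x - x^2/2 + (50/49)*x^3) * y
        ≤ x * (1+δ/3) * (y - y^2/2 - (50/49)*y^3) := by
      nlinarith [mul_le_mul_of_nonneg_left hs (le_of_lt (mul_pos hx hy0))]
    have hL : (x - x^2/2 + x^3/(1-x)) * y ≤ (x - x^2/2 + (50/49)*x^3) * y := by
      have := mul_le_mul_of_nonneg_right (by linarith [hu] : x - x^2/2 + x^3/(1-x) ≤ x - x^2/2 + (50/49)*x^3) hy0.le
      linarith
    have hR : x * (1+δ/3) * (y - y^2/2 - (50/49)*y^3)
        ≤ x * (1+δ/3) * (y - y^2/2 - y^3/(1-y)) := by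
      apply mul_le_mul_of_nonneg_left (by linarith [hv]) (by positivity)
    linarith
  have hpos : 0 ≤ (x/y) * (1 + δ/3) := by positivity
  calc Real.log (1 + x) ≤ x - x^2/2 + x^3/(1-x) := hUx
    _ ≤ (x/y) * (1 + δ/3) * (y - y^2/2 - y^3/(1-y)) := key
    _ ≤ (x/y) * (1 + δ/3) * Real.log (1 + y) := mul_le_mul_of_nonneg_left hLy hpos

theorem stmt_0 (σ₀ δ a : ℝ)
    (hσ₁ : 1/2 ≤ σ₀) (hσ₂ : σ₀ ≤ 1) (hδ₁ : 0 < δ) (hδ₂ : δ ≤ 1/100)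
    (ha : a = Real.log (1 + (2 - σ₀ - 10*δ) / (1/δ - 2)) /
              Real.log (1 + (2 - σ₀ - δ) / (1/δ - 2))) :
    a ≤ ((2 - σ₀ - 10*δ) / (2 - σ₀ - δ)) * (1 + δ/3) := by
  have hD : (98:ℝ) ≤ 1/δ - 2 := by
    have : (100:ℝ) ≤ 1/δ := by rw [le_div_iff₀ hδ₁]; linarith
    linarith
  have hD0 : (0:ℝ) < 1/δ - 2 := by linarith
  set D := 1/δ - 2 with hDdef
  set x := (2 - σ₀ - 10*δ) / D with hxdef
  set y := (2 - σ₀ - δ) / D with hydef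
  clear_value x y D
  have hnum1 : (0:ℝ) < 2 - σ₀ - 10*δ := by linarith
  have hnum2 : (0:ℝ) < 2 - σ₀ - δ := by linarith
  have hx : 0 < x := by rw [hxdef]; exact div_pos hnum1 hD0
  have hy0 : 0 < y := by rw [hydef]; exact div_pos hnum2 hD0
  have hxy : x ≤ y := by
    rw [hxdef, hydef, div_le_div_iff₀ hD0 hD0]; nlinarith
  have hy : y ≤ 1/50 := by
    rw [hydef, div_le_iff₀ hD0]; nlinarith [hD, hσ₁, hδ₁]
  have h1 : y - x ≤ 10*δ*y := by
    have he : y - x = 9*δ/D := by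
      rw [hxdef, hydef]; field_simp; ring
    have he2 : 10*δ*y = (10*δ*(2 - σ₀ - δ))/D := by
      rw [hydef]; ring
    rw [he, he2, div_le_div_iff₀ hD0 hD0]
    nlinarith [mul_nonneg (mul_pos hδ₁ hD0).le (show (0:ℝ) ≤ 10*(2 - σ₀ - δ) - 9 by linarith)]
  have h2 : y ≤ 2*δ := by
    rw [hydef, div_le_iff₀ hD0]
    have : 2*δ*(1/δ - 2) = 2 - 4*δ := by field_simp; ring
    rw [hDdef, this]; linarith
  have hcore := core hx hxy hy hδ₁ hδ₂ h1 h2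
  have hL : 0 < Real.log (1 + y) := Real.log_pos (by linarith)
  have hratio : x/y = (2 - σ₀ - 10*δ) / (2 - σ₀ - δ) := by
    rw [hxdef, hydef]
    rw [div_div_div_cancel_right₀]
    exact hD0.ne'
  rw [ha, div_le_iff₀ hL, ← hratio]
  exact hcore
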